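/- For n = 3: the algebra B_3^(2) is 5-dimensional over K, with basis the images of 1, r_{12}^3, r_{13}^2, r_{23}^1, and r_{12}^3 r_{23}^1; the induced differential d_B satisfies d_B(r_{12}^3) = 0, d_B(r_{23}^1) = 0, d_B(r_{13}^2) = r_{12}^3 r_{23}^1, and d_B(r_{12}^3 r_{23}^1) = 0; the kernel of d_B is the 4-dimensional span of the images of 1, r_{12}^3, r_{23}^1, r_{12}^3 r_{23}^1, and the range of d_B is the 1-dimensional span of the image of r_{12}^3 r_{23}^1. Consequently the homology of (B_3^(2), d_B) has dimension 1 in degree 0, dimension 2 in degree 1, and dimension 0 in degree 2. -/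

import Mathlib

/-!
Only one product of two generators of `B_3^(2)` survives the monomial relations, namely
`r_{12}^3 r_{23}^1`, and every product of three generators vanishes; hence `1`, the three
generators and that product span.  They are linearly independent because
`r_{12}^3 ↦ E₀₁`, `r_{13}^2 ↦ E₀₃`, `r_{23}^1 ↦ E₁₂` respects the relations and sends them to
`1, E₀₁, E₀₃, E₁₂, E₀₂` in `4 × 4` matrices.  In this basis `d_B` kills everything except
`r_{13}^2 ↦ r_{12}^3 r_{23}^1`, and kernel, image and homology are read off from that.
-/

noncomputable section

/-- Index type for the generators `r_{ij}^m` of `B_n^(2)`: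
`1 ≤ i < j ≤ n`, `m ∈ {1,…,n} ∖ {i,j}`.  An element is `(i, j, m)`. -/
abbrev B2Idx (n : ℕ) : Type :=
  {x : ℕ × ℕ × ℕ //
    x.1 ∈ Finset.Icc 1 n ∧ x.2.1 ∈ Finset.Icc 1 n ∧ x.2.2 ∈ Finset.Icc 1 n ∧
    x.1 < x.2.1 ∧ x.2.2 ≠ x.1 ∧ x.2.2 ≠ x.2.1}

variable (K : Type) [Field K] (n : ℕ)

/-- The generating set of the ideal `I_n`. -/
def b2Rels : Set (FreeAlgebra K (B2Idx n)) :=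
  {x | ∃ g1 g2 : B2Idx n,
      ¬(g2.1.1 = g1.1.2.1 ∧ (g2.1.2.2 = g1.1.2.2 ∨ g2.1.2.2 = g1.1.1)) ∧
      x = FreeAlgebra.ι K g1 * FreeAlgebra.ι K g2}

/-- The relation presenting `B_n^(2)` as a `RingQuot`. -/
def b2Rel : FreeAlgebra K (B2Idx n) → FreeAlgebra K (B2Idx n) → Prop :=
  fun a b => a ∈ b2Rels K n ∧ b = 0

/-- The monomial algebra `B_n^(2) = F/I_n`. -/
abbrev B2Alg := RingQuot (b2Rel K n)

/-- The quotient map `F → B_n^(2)`. -/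
def mkB : FreeAlgebra K (B2Idx n) →ₐ[K] B2Alg K n := RingQuot.mkAlgHom K (b2Rel K n)

/-- `δ(r_{ij}^m) = -Σ_{l=i+1, l≠m}^{j-1} (r_{il}^m r_{lj}^m + r_{il}^m r_{lj}^i)`, plus,
if `i < m < j`, the additional summand `Σ_{l ∈ {1,…,n} ∖ {i,m}} r_{im}^l r_{mj}^i`. -/
def delta (g : B2Idx n) : FreeAlgebra K (B2Idx n) :=
  -(∑ l ∈ ((Finset.Ioo g.1.1 g.1.2.1).erase g.1.2.2).attach,
      (FreeAlgebra.ι K (⟨(g.1.1, l.1, g.1.2.2), by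
          have h1 := g.2; have h2 := l.2; dsimp only
          simp only [Finset.mem_erase, Finset.mem_Ioo, Finset.mem_Icc] at h1 h2 ⊢
          omega⟩ : B2Idx n) *
        FreeAlgebra.ι K (⟨(l.1, g.1.2.1, g.1.2.2), by
          have h1 := g.2; have h2 := l.2; dsimp only
          simp only [Finset.mem_erase, Finset.mem_Ioo, Finset.mem_Icc] at h1 h2 ⊢
          omega⟩ : B2Idx n) +
       FreeAlgebra.ι K (⟨(g.1.1, l.1, g.1.2.2), by
          have h1 := g.2; have h2 := l.2; dsimp only
          simp only [Finset.mem_erase, Finset.mem_Ioo, Finset.mem_Icc] at h1 h2 ⊢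
          omega⟩ : B2Idx n) *
        FreeAlgebra.ι K (⟨(l.1, g.1.2.1, g.1.1), by
          have h1 := g.2; have h2 := l.2; dsimp only
          simp only [Finset.mem_erase, Finset.mem_Ioo, Finset.mem_Icc] at h1 h2 ⊢
          omega⟩ : B2Idx n))) +
  (if h : g.1.1 < g.1.2.2 ∧ g.1.2.2 < g.1.2.1 then
      ∑ l ∈ (((Finset.Icc 1 n).erase g.1.1).erase g.1.2.2).attach,
        FreeAlgebra.ι K (⟨(g.1.1, g.1.2.2, l.1), by
            have h1 := g.2; have h2 := l.2; dsimp only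
            simp only [Finset.mem_erase, Finset.mem_Icc] at h1 h2 ⊢
            omega⟩ : B2Idx n) *
        FreeAlgebra.ι K (⟨(g.1.2.2, g.1.2.1, g.1.1), by
            have h1 := g.2; dsimp only
            simp only [Finset.mem_Icc] at h1 ⊢
            omega⟩ : B2Idx n)
    else 0)

/-- The degree-`d` homogeneous component of `B_n^(2)`. -/
def W (d : ℕ) : Submodule K (B2Alg K n) :=
  Submodule.span K
    {x | ∃ w : List (B2Idx n), w.length = d ∧ x = mkB K n ((w.map (FreeAlgebra.ι K)).prod)}

/-- The image of the generator `r_{12}^3` in `B_3^(2)`. -/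
def r12 : B2Alg K 3 := mkB K 3 (FreeAlgebra.ι K (⟨(1, 2, 3), by decide⟩ : B2Idx 3))

/-- The image of the generator `r_{13}^2` in `B_3^(2)`. -/
def r13 : B2Alg K 3 := mkB K 3 (FreeAlgebra.ι K (⟨(1, 3, 2), by decide⟩ : B2Idx 3))

/-- The image of the generator `r_{23}^1` in `B_3^(2)`. -/
def r23 : B2Alg K 3 := mkB K 3 (FreeAlgebra.ι K (⟨(2, 3, 1), by decide⟩ : B2Idx 3))

/-- The claimed basis `1, r_{12}^3, r_{13}^2, r_{23}^1, r_{12}^3 r_{23}^1` of `B_3^(2)`. -/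
def basisFam : Fin 5 → B2Alg K 3 :=
  ![1, r12 K, r13 K, r23 K, r12 K * r23 K]

open Submodule in
theorem Submodule.span_eq_top_of_mul_mem {R A : Type*} [CommSemiring R] [Semiring A]
    [Algebra R A] {s t : Set A} (hs : Algebra.adjoin R s = ⊤) (h1 : 1 ∈ span R t)
    (hmul : ∀ x ∈ s, ∀ y ∈ t, x * y ∈ span R t) : span R t = ⊤ := by
  have hgen : ∀ x ∈ s, ∀ m ∈ span R t, x * m ∈ span R t := fun x hx m hm => by
    induction hm using span_induction with
    | mem y hy => exact hmul x hx y hy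
    | zero => simp
    | add a b _ _ ha hb => rw [mul_add]; exact add_mem ha hb
    | smul r a _ ha => rw [mul_smul_comm]; exact smul_mem _ r ha
  have hadj : ∀ a ∈ Algebra.adjoin R s, ∀ m ∈ span R t, a * m ∈ span R t := fun a ha => by
    induction ha using Algebra.adjoin_induction with
    | mem x hx => exact hgen x hx
    | algebraMap r =>
      intro m hm
      rw [Algebra.algebraMap_eq_smul_one, smul_mul_assoc, one_mul]
      exact smul_mem _ r hm
    | add a b _ _ ha hb => intro m hm; rw [add_mul]; exact add_mem (ha m hm) (hb m hm)
    | mul a b _ _ ha hb => intro m hm; rw [mul_assoc]; exact ha _ (hb m hm)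
  refine eq_top_iff.mpr fun a _ => ?_
  simpa using hadj a (hs ▸ Algebra.mem_top) 1 h1

namespace Module.Basis

variable {F V W ι : Type*} [Field F] [AddCommGroup V] [Module F V] [AddCommGroup W] [Module F W]
  (b : Basis ι F V)

theorem eq_smulRight_of_apply_eq_zero {f : V →ₗ[F] W} {i₀ : ι}
    (hf : ∀ i ≠ i₀, f (b i) = 0) :
    f = (b.coord i₀).smulRight (f (b i₀)) :=
  b.ext fun i => by
    by_cases h : i = i₀
    · simp [h]
    · simp [hf i h, Finsupp.single_eq_of_ne' h]

theorem ker_eq_span_image_compl_of_apply_eq_zero {f : V →ₗ[F] W} {i₀ : ι}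
    (hf : ∀ i ≠ i₀, f (b i) = 0) (hi₀ : f (b i₀) ≠ 0) :
    LinearMap.ker f = Submodule.span F (b '' {i₀}ᶜ) := by
  ext x
  rw [b.mem_span_image, LinearMap.mem_ker, b.eq_smulRight_of_apply_eq_zero hf]
  simp [hi₀, Set.subset_compl_singleton_iff]

theorem range_eq_span_singleton_of_apply_eq_zero {f : V →ₗ[F] W} {i₀ : ι}
    (hf : ∀ i ≠ i₀, f (b i) = 0) :
    LinearMap.range f = Submodule.span F {f (b i₀)} := by
  rw [b.eq_smulRight_of_apply_eq_zero hf, LinearMap.range_smulRight_apply]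
  · simp
  · exact fun h => by simpa using LinearMap.congr_fun h (b i₀)

theorem span_image_inf_span_image (s t : Set ι) :
    Submodule.span F (b '' s) ⊓ Submodule.span F (b '' t) =
      Submodule.span F (b '' (s ∩ t)) := by
  ext x
  simp [Submodule.mem_inf, b.mem_span_image]

theorem finrank_span_image (s : Finset ι) :
    Module.finrank F (Submodule.span F (b '' s)) = s.card := by
  have h := finrank_span_eq_card (b.linearIndependent.comp ((↑) : s → ι) Subtype.val_injective)
  rw [Set.image_eq_range]
  exact h.trans (Fintype.card_coe s)

end Module.Basis

section Generators

def b2Gen (g : B2Idx n) : B2Alg K n := mkB K n (FreeAlgebra.ι K g)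

theorem b2Gen_mul_b2Gen_eq_zero {g₁ g₂ : B2Idx n}
    (h : ¬(g₂.1.1 = g₁.1.2.1 ∧ (g₂.1.2.2 = g₁.1.2.2 ∨ g₂.1.2.2 = g₁.1.1))) :
    b2Gen K n g₁ * b2Gen K n g₂ = 0 := by
  rw [b2Gen, b2Gen, ← map_mul, ← map_zero (mkB K n)]
  exact RingQuot.mkAlgHom_rel K ⟨⟨g₁, g₂, h, rfl⟩, rfl⟩

theorem adjoin_range_b2Gen : Algebra.adjoin K (Set.range (b2Gen K n)) = ⊤ := by
  change Algebra.adjoin K (Set.range (mkB K n ∘ FreeAlgebra.ι K)) = ⊤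
  rw [Set.range_comp, Algebra.adjoin_image, FreeAlgebra.adjoin_range_ι, Algebra.map_top,
    AlgHom.range_eq_top]
  exact RingQuot.mkAlgHom_surjective K _

theorem W_zero : W K n 0 = Submodule.span K {1} := by
  simp [W, List.length_eq_zero_iff]

theorem W_one : W K n 1 = Submodule.span K (Set.range (b2Gen K n)) := by
  rw [W]
  congr 1
  ext x
  simp only [List.length_eq_one_iff, Set.mem_range, b2Gen]
  constructor
  · rintro ⟨_, ⟨g, rfl⟩, rfl⟩
    exact ⟨g, by simp⟩
  · rintro ⟨g, rfl⟩
    exact ⟨[g], ⟨g, rfl⟩, by simp⟩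

end Generators

section Differential

def IsDeltaDerivation (D : FreeAlgebra K (B2Idx n) →ₗ[K] FreeAlgebra K (B2Idx n)) : Prop :=
  ∀ w : List (B2Idx n),
    D ((w.map (FreeAlgebra.ι K)).prod) =
      ∑ t : Fin w.length, ((-1 : K) ^ (t : ℕ)) •
        (((w.take t).map (FreeAlgebra.ι K)).prod * delta K n (w.get t) *
          ((w.drop (t + 1)).map (FreeAlgebra.ι K)).prod)

variable {K n} {D : FreeAlgebra K (B2Idx n) →ₗ[K] FreeAlgebra K (B2Idx n)}

theorem IsDeltaDerivation.map_one (hD : IsDeltaDerivation K n D) : D 1 = 0 := by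
  simpa using hD []

theorem IsDeltaDerivation.map_ι (hD : IsDeltaDerivation K n D) (g : B2Idx n) :
    D (FreeAlgebra.ι K g) = delta K n g := by
  simpa using hD [g]

theorem IsDeltaDerivation.map_ι_mul_ι (hD : IsDeltaDerivation K n D) (g₁ g₂ : B2Idx n) :
    D (FreeAlgebra.ι K g₁ * FreeAlgebra.ι K g₂) =
      delta K n g₁ * FreeAlgebra.ι K g₂ - FreeAlgebra.ι K g₁ * delta K n g₂ := by
  simpa [Fin.sum_univ_two, sub_eq_add_neg] using hD [g₁, g₂]

end Differential

section Three

def idx12 : B2Idx 3 := ⟨(1, 2, 3), by decide⟩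
def idx13 : B2Idx 3 := ⟨(1, 3, 2), by decide⟩
def idx23 : B2Idx 3 := ⟨(2, 3, 1), by decide⟩

theorem B2Idx.three_cases (g : B2Idx 3) : g = idx12 ∨ g = idx13 ∨ g = idx23 := by
  obtain ⟨⟨i, j, m⟩, h⟩ := g
  simp only [Finset.mem_Icc] at h
  simp only [idx12, idx13, idx23, Subtype.mk.injEq, Prod.mk.injEq]
  omega

theorem r12_eq_b2Gen : r12 K = b2Gen K 3 idx12 := rfl
theorem r13_eq_b2Gen : r13 K = b2Gen K 3 idx13 := rfl
theorem r23_eq_b2Gen : r23 K = b2Gen K 3 idx23 := rfl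

theorem b2Gen_mul_b2Gen_three_eq_zero {g₁ g₂ : B2Idx 3}
    (h : ¬(g₁ = idx12 ∧ g₂ = idx23)) :
    b2Gen K 3 g₁ * b2Gen K 3 g₂ = 0 := by
  apply b2Gen_mul_b2Gen_eq_zero
  rcases B2Idx.three_cases g₁ with rfl | rfl | rfl <;>
    rcases B2Idx.three_cases g₂ with rfl | rfl | rfl <;>
    first | decide | exact absurd ⟨rfl, rfl⟩ h

theorem range_b2Gen_three : Set.range (b2Gen K 3) = {r12 K, r13 K, r23 K} := by
  ext x
  constructor
  · rintro ⟨g, rfl⟩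
    rcases B2Idx.three_cases g with rfl | rfl | rfl <;>
      simp [r12_eq_b2Gen, r13_eq_b2Gen, r23_eq_b2Gen]
  · rintro (rfl | rfl | rfl) <;> exact ⟨_, rfl⟩

theorem b2Gen_mul_basisFam_mem (g : B2Idx 3) (j : Fin 5) :
    b2Gen K 3 g * basisFam K j ∈ Submodule.span K (Set.range (basisFam K)) := by
  set S := Submodule.span K (Set.range (basisFam K))
  have mem : ∀ i, basisFam K i ∈ S := fun i => Submodule.subset_span ⟨i, rfl⟩
  have h12 : b2Gen K 3 idx12 ∈ S := mem 1
  have h13 : b2Gen K 3 idx13 ∈ S := mem 2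
  have h23 : b2Gen K 3 idx23 ∈ S := mem 3
  have h1223 : b2Gen K 3 idx12 * b2Gen K 3 idx23 ∈ S := mem 4
  rcases B2Idx.three_cases g with rfl | rfl | rfl <;> fin_cases j <;>
    simp +decide [basisFam, r12_eq_b2Gen, r13_eq_b2Gen, r23_eq_b2Gen, ← mul_assoc,
      h12, h13, h23, h1223, b2Gen_mul_b2Gen_three_eq_zero]

theorem delta_idx12 : delta K 3 idx12 = 0 := by
  rw [delta, dif_neg (by decide), Finset.attach_eq_empty_iff.mpr (by decide), Finset.sum_empty,
    neg_zero, add_zero]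

theorem delta_idx23 : delta K 3 idx23 = 0 := by
  rw [delta, dif_neg (by decide), Finset.attach_eq_empty_iff.mpr (by decide), Finset.sum_empty,
    neg_zero, add_zero]

theorem delta_idx13 : delta K 3 idx13 = FreeAlgebra.ι K idx12 * FreeAlgebra.ι K idx23 := by
  rw [delta, dif_pos (by decide), Finset.attach_eq_empty_iff.mpr (by decide), Finset.sum_empty,
    neg_zero, zero_add, Finset.sum_eq_single_of_mem ⟨3, by decide⟩ (Finset.mem_attach _ _)]
  · rfl
  · rintro ⟨l, hl⟩ - hne
    simp only [idx13, Finset.mem_erase, Finset.mem_Icc] at hl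
    exact (hne (Subtype.ext (show l = 3 by omega))).elim

end Three

section Basis

open Matrix in
def genMatrix (g : B2Idx 3) : Matrix (Fin 4) (Fin 4) K :=
  if g = idx12 then single 0 1 1 else if g = idx13 then single 0 3 1 else single 1 2 1

theorem genMatrix_mul_genMatrix {g₁ g₂ : B2Idx 3} (h : ¬(g₁ = idx12 ∧ g₂ = idx23)) :
    genMatrix K g₁ * genMatrix K g₂ = 0 := by
  rcases B2Idx.three_cases g₁ with rfl | rfl | rfl <;>
    rcases B2Idx.three_cases g₂ with rfl | rfl | rfl <;>
    simp +decide [genMatrix] at h ⊢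

def toMatrix : B2Alg K 3 →ₐ[K] Matrix (Fin 4) (Fin 4) K :=
  RingQuot.liftAlgHom K ⟨FreeAlgebra.lift K (genMatrix K), by
    rintro _ _ ⟨⟨g₁, g₂, h, rfl⟩, rfl⟩
    rw [map_mul, FreeAlgebra.lift_ι_apply, FreeAlgebra.lift_ι_apply, map_zero]
    refine genMatrix_mul_genMatrix K fun ⟨h₁, h₂⟩ => h ?_
    subst h₁ h₂
    decide⟩

theorem toMatrix_b2Gen (g : B2Idx 3) : toMatrix K (b2Gen K 3 g) = genMatrix K g := by
  simp [toMatrix, b2Gen, mkB]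

open Matrix in
theorem toMatrix_comp_basisFam :
    toMatrix K ∘ basisFam K = ![1, single 0 1 1, single 0 3 1, single 1 2 1, single 0 2 1] := by
  funext i
  fin_cases i <;>
    simp +decide [basisFam, r12_eq_b2Gen, r13_eq_b2Gen, r23_eq_b2Gen, toMatrix_b2Gen, genMatrix]

open Matrix in
theorem linearIndependent_one_single :
    LinearIndependent K ![(1 : Matrix (Fin 4) (Fin 4) K),
      single 0 1 1, single 0 3 1, single 1 2 1, single 0 2 1] := by
  rw [Fintype.linearIndependent_iff]
  intro c hc
  have entry (i j : Fin 4) := congrFun (congrFun hc i) j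
  have h00 := entry 0 0
  have h01 := entry 0 1
  have h03 := entry 0 3
  have h12 := entry 1 2
  have h02 := entry 0 2
  simp [Fin.sum_univ_five, single, one_apply] at h00 h01 h03 h12 h02
  intro i
  fin_cases i <;> assumption

theorem linearIndependent_basisFam : LinearIndependent K (basisFam K) := by
  apply LinearIndependent.of_comp (toMatrix K).toLinearMap
  rw [AlgHom.coe_toLinearMap, toMatrix_comp_basisFam]
  exact linearIndependent_one_single K

theorem span_basisFam : Submodule.span K (Set.range (basisFam K)) = ⊤ := by
  refine Submodule.span_eq_top_of_mul_mem (adjoin_range_b2Gen K 3)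
    (Submodule.subset_span ⟨0, rfl⟩) ?_
  rintro _ ⟨g, rfl⟩ _ ⟨j, rfl⟩
  exact b2Gen_mul_basisFam_mem K g j

def b3Basis : Module.Basis (Fin 5) K (B2Alg K 3) :=
  .mk (linearIndependent_basisFam K) (span_basisFam K).ge

theorem b3Basis_apply (i : Fin 5) : b3Basis K i = basisFam K i := Module.Basis.mk_apply _ _ _

theorem r12_mul_r23_ne_zero : r12 K * r23 K ≠ 0 := by
  simpa [b3Basis_apply, basisFam] using (b3Basis K).ne_zero 4

theorem finrank_b2Alg_three : Module.finrank K (B2Alg K 3) = 5 := by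
  simp [Module.finrank_eq_card_basis (b3Basis K)]

theorem image_b3Basis_compl_two :
    b3Basis K '' {2}ᶜ = {1, r12 K, r23 K, r12 K * r23 K} := by
  ext x
  simp [b3Basis_apply, Fin.exists_fin_succ, basisFam, eq_comm]

theorem image_b3Basis_one_two_three : b3Basis K '' {1, 2, 3} = {r12 K, r13 K, r23 K} := by
  simp [Set.image_insert_eq, b3Basis_apply, basisFam]

theorem W_one_three : W K 3 1 = Submodule.span K (b3Basis K '' {1, 2, 3}) := by
  rw [W_one, range_b2Gen_three, image_b3Basis_one_two_three]

theorem W_two_three : W K 3 2 = Submodule.span K {r12 K * r23 K} := by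
  apply le_antisymm
  · rw [W, Submodule.span_le]
    rintro _ ⟨w, hw, rfl⟩
    obtain ⟨g₁, g₂, rfl⟩ := List.length_eq_two.mp hw
    have hprod :
        mkB K 3 ([g₁, g₂].map (FreeAlgebra.ι K)).prod = b2Gen K 3 g₁ * b2Gen K 3 g₂ := by
      simp [b2Gen]
    rw [SetLike.mem_coe, hprod]
    by_cases h : g₁ = idx12 ∧ g₂ = idx23
    · obtain ⟨rfl, rfl⟩ := h
      exact Submodule.mem_span_singleton_self _
    · rw [b2Gen_mul_b2Gen_three_eq_zero K h]
      exact zero_mem _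
  · rw [Submodule.span_le, Set.singleton_subset_iff]
    exact Submodule.subset_span
      ⟨[idx12, idx23], rfl, by simp [r12_eq_b2Gen, r23_eq_b2Gen, b2Gen]⟩

end Basis

section HomologyThree

variable {K} {D : FreeAlgebra K (B2Idx 3) →ₗ[K] FreeAlgebra K (B2Idx 3)}
  {dB : B2Alg K 3 →ₗ[K] B2Alg K 3}
  (hD : IsDeltaDerivation K 3 D) (hdB : ∀ x, dB (mkB K 3 x) = mkB K 3 (D x))
include hD hdB

theorem dB_one : dB 1 = 0 := by
  rw [← map_one (mkB K 3), hdB, hD.map_one, map_zero]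

theorem dB_b2Gen (g : B2Idx 3) : dB (b2Gen K 3 g) = mkB K 3 (delta K 3 g) := by
  rw [b2Gen, hdB, hD.map_ι]

theorem dB_r12 : dB (r12 K) = 0 := by
  rw [r12_eq_b2Gen, dB_b2Gen hD hdB, delta_idx12, map_zero]

theorem dB_r23 : dB (r23 K) = 0 := by
  rw [r23_eq_b2Gen, dB_b2Gen hD hdB, delta_idx23, map_zero]

theorem dB_r13 : dB (r13 K) = r12 K * r23 K := by
  rw [r13_eq_b2Gen, dB_b2Gen hD hdB, delta_idx13, map_mul]
  rfl

theorem dB_r12_mul_r23 : dB (r12 K * r23 K) = 0 := by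
  rw [r12_eq_b2Gen, r23_eq_b2Gen, b2Gen, b2Gen, ← map_mul, hdB, hD.map_ι_mul_ι, delta_idx12,
    delta_idx23, zero_mul, mul_zero, sub_zero, map_zero]

theorem dB_b3Basis_of_ne_two (i : Fin 5) (hi : i ≠ 2) : dB (b3Basis K i) = 0 := by
  rw [b3Basis_apply]
  fin_cases i
  · exact dB_one hD hdB
  · exact dB_r12 hD hdB
  · exact absurd rfl hi
  · exact dB_r23 hD hdB
  · exact dB_r12_mul_r23 hD hdB

theorem ker_dB_eq_span_image :
    LinearMap.ker dB = Submodule.span K (b3Basis K '' {2}ᶜ) :=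
  (b3Basis K).ker_eq_span_image_compl_of_apply_eq_zero (dB_b3Basis_of_ne_two hD hdB)
    (by rw [b3Basis_apply]; exact (dB_r13 hD hdB).trans_ne (r12_mul_r23_ne_zero K))

theorem ker_dB :
    LinearMap.ker dB = Submodule.span K {(1 : B2Alg K 3), r12 K, r23 K, r12 K * r23 K} := by
  rw [ker_dB_eq_span_image hD hdB, image_b3Basis_compl_two]

theorem finrank_ker_dB : Module.finrank K ↥(LinearMap.ker dB) = 4 := by
  rw [ker_dB_eq_span_image hD hdB, ← Finset.coe_singleton, ← Finset.coe_compl,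
    Module.Basis.finrank_span_image]
  rfl

theorem range_dB : LinearMap.range dB = Submodule.span K {r12 K * r23 K} := by
  rw [(b3Basis K).range_eq_span_singleton_of_apply_eq_zero (dB_b3Basis_of_ne_two hD hdB),
    b3Basis_apply]
  rw [show basisFam K 2 = r13 K from rfl, dB_r13 hD hdB]

theorem finrank_range_dB : Module.finrank K ↥(LinearMap.range dB) = 1 := by
  rw [range_dB hD hdB, finrank_span_singleton (r12_mul_r23_ne_zero K)]

theorem W_zero_le_ker_dB : W K 3 0 ≤ LinearMap.ker dB := by
  rw [W_zero, Submodule.span_singleton_le_iff_mem]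
  exact dB_one hD hdB

theorem W_two_le_map_dB_W_one : W K 3 2 ≤ (W K 3 1).map dB := by
  rw [W_two_three, Submodule.span_singleton_le_iff_mem, ← dB_r13 hD hdB]
  exact Submodule.mem_map_of_mem
    (by rw [W_one_three]; exact Submodule.subset_span ⟨2, by simp, b3Basis_apply K 2⟩)

theorem finrank_ker_dB_inf_W_zero : Module.finrank K ↥(LinearMap.ker dB ⊓ W K 3 0) = 1 := by
  rw [inf_eq_right.mpr (W_zero_le_ker_dB hD hdB), W_zero]
  exact finrank_span_singleton (by simpa [b3Basis_apply, basisFam] using (b3Basis K).ne_zero 0)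

theorem finrank_ker_dB_inf_W_one : Module.finrank K ↥(LinearMap.ker dB ⊓ W K 3 1) = 2 := by
  have hinter : ({2}ᶜ ∩ {1, 2, 3} : Set (Fin 5)) = ↑({1, 3} : Finset (Fin 5)) := by
    ext i; fin_cases i <;> simp
  rw [ker_dB_eq_span_image hD hdB, W_one_three, Module.Basis.span_image_inf_span_image, hinter,
    Module.Basis.finrank_span_image]
  rfl

-- Written with `@HasQuotient.Quotient` as in the statement: the notation `⧸` finds no
-- `HasQuotient` instance for these subspaces.
theorem finrank_homology_one :
    Module.finrank K
      (@HasQuotient.Quotient ↥(LinearMap.ker dB ⊓ W K 3 1) _ Submodule.hasQuotient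
        (Submodule.comap (LinearMap.ker dB ⊓ W K 3 1).subtype
          (Submodule.map dB (W K 3 0)))) = 2 := by
  rw [(LinearMap.le_ker_iff_map).mp (W_zero_le_ker_dB hD hdB), Submodule.comap_bot,
    Submodule.ker_subtype]
  exact (Submodule.quotEquivOfEqBot ⊥ rfl).finrank_eq.trans (finrank_ker_dB_inf_W_one hD hdB)

theorem finrank_homology_two :
    Module.finrank K
      (@HasQuotient.Quotient ↥(LinearMap.ker dB ⊓ W K 3 2) _ Submodule.hasQuotient
        (Submodule.comap (LinearMap.ker dB ⊓ W K 3 2).subtype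
          (Submodule.map dB (W K 3 1)))) = 0 := by
  rw [Submodule.comap_subtype_eq_top.mpr (inf_le_right.trans (W_two_le_map_dB_W_one hD hdB))]
  exact @Module.finrank_zero_of_subsingleton _ _ _ _ _ _
    (Submodule.Quotient.subsingleton_iff.mpr rfl)

end HomologyThree

/-- `B_3^(2)` is 5-dimensional with basis
`1, r_{12}^3, r_{13}^2, r_{23}^1, r_{12}^3 r_{23}^1`; the differential `d_B` kills
`r_{12}^3`, `r_{23}^1` and `r_{12}^3 r_{23}^1` and sends `r_{13}^2` to `r_{12}^3 r_{23}^1`;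
its kernel is the span of `1, r_{12}^3, r_{23}^1, r_{12}^3 r_{23}^1` (dimension 4) and its
range is the span of `r_{12}^3 r_{23}^1` (dimension 1); the homology has dimensions
`1, 2, 0` in degrees `0, 1, 2`. -/
theorem statement10
    (D : FreeAlgebra K (B2Idx 3) →ₗ[K] FreeAlgebra K (B2Idx 3))
    (hD : ∀ w : List (B2Idx 3),
      D ((w.map (FreeAlgebra.ι K)).prod) =
        ∑ t : Fin w.length, ((-1 : K) ^ (t : ℕ)) •
          (((w.take t).map (FreeAlgebra.ι K)).prod * delta K 3 (w.get t) *
            ((w.drop (t + 1)).map (FreeAlgebra.ι K)).prod))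
    (dB : B2Alg K 3 →ₗ[K] B2Alg K 3)
    (hdB : ∀ x, dB (mkB K 3 x) = mkB K 3 (D x)) :
    (LinearIndependent K (basisFam K) ∧
      Submodule.span K (Set.range (basisFam K)) = ⊤ ∧
      Module.finrank K (B2Alg K 3) = 5) ∧
    (dB (r12 K) = 0 ∧ dB (r23 K) = 0 ∧ dB (r13 K) = r12 K * r23 K ∧
      dB (r12 K * r23 K) = 0) ∧
    (LinearMap.ker dB =
        Submodule.span K {(1 : B2Alg K 3), r12 K, r23 K, r12 K * r23 K} ∧
      Module.finrank K ↥(LinearMap.ker dB) = 4) ∧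
    (LinearMap.range dB = Submodule.span K {r12 K * r23 K} ∧
      Module.finrank K ↥(LinearMap.range dB) = 1) ∧
    (Module.finrank K ↥(LinearMap.ker dB ⊓ W K 3 0) = 1 ∧
      Module.finrank K
        (@HasQuotient.Quotient ↥(LinearMap.ker dB ⊓ W K 3 1) _ Submodule.hasQuotient
          (Submodule.comap (LinearMap.ker dB ⊓ W K 3 1).subtype
            (Submodule.map dB (W K 3 0)))) = 2 ∧
      Module.finrank K
        (@HasQuotient.Quotient ↥(LinearMap.ker dB ⊓ W K 3 2) _ Submodule.hasQuotient
          (Submodule.comap (LinearMap.ker dB ⊓ W K 3 2).subtype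
            (Submodule.map dB (W K 3 1)))) = 0) := by
  exact ⟨⟨linearIndependent_basisFam K, span_basisFam K, finrank_b2Alg_three K⟩,
    ⟨dB_r12 hD hdB, dB_r23 hD hdB, dB_r13 hD hdB, dB_r12_mul_r23 hD hdB⟩,
    ⟨ker_dB hD hdB, finrank_ker_dB hD hdB⟩, ⟨range_dB hD hdB, finrank_range_dB hD hdB⟩,
    finrank_ker_dB_inf_W_zero hD hdB, finrank_homology_one hD hdB, finrank_homology_two hD hdB⟩

end
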